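/- arXiv:0910.3641 — 11 statements merged into one kernel-verified Lean document; each statement's English description precedes it below -/
import Mathlib

section
/- Let K be an algebraically closed field and let f, g be nonzero polynomials in two variables over K (elements of MvPolynomial (Fin 2) K) such that every common divisor of f and g is a unit. Then the common zero set Z = {p : Fin 2 → K | f(p) = 0 and g(p) = 0} is finite and Z.ncard ≤ totalDegree(f) · totalDegree(g). -/
/-!
Let `V_d` be the space of polynomials in two variables of total degree `≤ d`, of dimension
`(d + 1)(d + 2) / 2`. For coprime `f, g` of degrees `m, m'` the Koszul sequence
`0 → V_n → V_{n+m'} × V_{n+m} → V_{n+m+m'}`, `w ↦ (g w, -f w)`, `(u, v) ↦ f u + g v`, is exact,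
so the subspace `f V_{n+m'} + g V_{n+m}` has codimension exactly `m m'`. It vanishes on every
finite set `S` of common zeros, while evaluation `V_{n+m+m'} → K^S` is onto as soon as
`|S| ≤ n + 1` (products of affine linear forms separate points). Hence `|S| ≤ m m'`.
-/

open MvPolynomial Module Function

section LinearAlgebra

variable {K W U V E : Type*} [DivisionRing K] [AddCommGroup W] [Module K W]
  [AddCommGroup U] [Module K U] [FiniteDimensional K U]
  [AddCommGroup V] [Module K V] [FiniteDimensional K V] [AddCommGroup E] [Module K E]

theorem finrank_add_finrank_le_of_exact_of_comp_eq_zero {ψ : W →ₗ[K] U} {φ : U →ₗ[K] V}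
    {ev : V →ₗ[K] E} (hψ : Injective ψ) (hψφ : Exact ψ φ) (hφev : ev ∘ₗ φ = 0)
    (hev : Surjective ev) :
    finrank K E + finrank K U ≤ finrank K V + finrank K W := by
  have hU := φ.finrank_range_add_finrank_ker
  have hV := ev.finrank_range_add_finrank_ker
  have hker : finrank K (LinearMap.ker φ) = finrank K W := by
    rw [hψφ.linearMap_ker_eq, LinearMap.finrank_range_of_inj hψ]
  have hrange : finrank K (LinearMap.range ev) = finrank K E := by
    rw [LinearMap.range_eq_top.mpr hev, finrank_top]
  have hle : finrank K (LinearMap.range φ) ≤ finrank K (LinearMap.ker ev) :=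
    Submodule.finrank_mono (LinearMap.range_le_ker_iff.mpr hφev)
  omega

end LinearAlgebra

theorem Set.finite_and_ncard_le_of_forall_finset_card_le {α : Type*} {s : Set α} {N : ℕ}
    (h : ∀ t : Finset α, ↑t ⊆ s → t.card ≤ N) : s.Finite ∧ s.ncard ≤ N := by
  have hfin : s.Finite := Set.not_infinite.mp fun hinf => by
    obtain ⟨t, hts, hcard⟩ := hinf.exists_subset_card_eq (N + 1)
    have := h t hts
    omega
  refine ⟨hfin, ?_⟩
  rw [Set.ncard_eq_toFinset_card s hfin]
  exact h _ (by simp)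

open Finset in
theorem Nat.two_mul_card_add_le (d : ℕ) :
    2 * Nat.card {x : ℕ × ℕ // x.1 + x.2 ≤ d} = (d + 1) * (d + 2) := by
  have hset : {x : ℕ × ℕ | x.1 + x.2 ≤ d} = ↑((range (d + 1)).biUnion antidiagonal) := by
    ext x
    simp
  have hdisj : (range (d + 1) : Set ℕ).PairwiseDisjoint antidiagonal :=
    fun k _ l _ hkl => disjoint_left.mpr fun x hk hl =>
      hkl ((mem_antidiagonal.mp hk).symm.trans (mem_antidiagonal.mp hl))
  rw [← Set.coe_ofPred, hset, Nat.card_coe_set_eq, Set.ncard_coe_finset, card_biUnion hdisj]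
  simp only [Nat.card_antidiagonal]
  have hgauss := sum_range_id_mul_two (d + 2)
  rw [sum_range_succ', add_zero, show d + 2 - 1 = d + 1 by omega] at hgauss
  linarith

namespace MvPolynomial

section Koszul

variable {σ R : Type*} [CommRing R]

theorem mul_mem_restrictTotalDegree {f u : MvPolynomial σ R} {a b : ℕ}
    (hu : u ∈ restrictTotalDegree σ R a) (hab : f.totalDegree + a ≤ b) :
    f * u ∈ restrictTotalDegree σ R b := by
  rw [mem_restrictTotalDegree] at hu ⊢
  exact (totalDegree_mul f u).trans (by omega)

noncomputable def mulRestrictTotalDegree (f : MvPolynomial σ R) {a b : ℕ}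
    (hab : f.totalDegree + a ≤ b) :
    restrictTotalDegree σ R a →ₗ[R] restrictTotalDegree σ R b :=
  (LinearMap.mulLeft R f).restrict fun _ hu => mul_mem_restrictTotalDegree hu hab

variable (f g : MvPolynomial σ R) (n : ℕ)

/- The two maps of the Koszul complex `0 → A → A² → A` of `(f, g)`, in its strand of total
degree `n + deg f + deg g`. -/
noncomputable def koszulSum :
    restrictTotalDegree σ R (n + g.totalDegree) × restrictTotalDegree σ R (n + f.totalDegree) →ₗ[R]
      restrictTotalDegree σ R (n + f.totalDegree + g.totalDegree) :=
  (mulRestrictTotalDegree f (by omega)).coprod (mulRestrictTotalDegree g (by omega))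

noncomputable def koszulSyzygy :
    restrictTotalDegree σ R n →ₗ[R]
      restrictTotalDegree σ R (n + g.totalDegree) × restrictTotalDegree σ R (n + f.totalDegree) :=
  (mulRestrictTotalDegree g (by omega)).prod (-mulRestrictTotalDegree f (by omega))

@[simp] theorem coe_koszulSum_apply (x) :
    (koszulSum f g n x : MvPolynomial σ R) = f * x.1 + g * x.2 :=
  rfl

@[simp] theorem coe_koszulSyzygy_apply_fst (w) :
    ((koszulSyzygy f g n w).1 : MvPolynomial σ R) = g * w :=
  rfl

@[simp] theorem coe_koszulSyzygy_apply_snd (w) :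
    ((koszulSyzygy f g n w).2 : MvPolynomial σ R) = -(f * w) :=
  rfl

variable {f g} [IsDomain R]

theorem mem_restrictTotalDegree_of_mul_mem {w : MvPolynomial σ R} (hg : g ≠ 0)
    (h : g * w ∈ restrictTotalDegree σ R (n + g.totalDegree)) :
    w ∈ restrictTotalDegree σ R n := by
  rcases eq_or_ne w 0 with rfl | hw
  · exact zero_mem _
  rw [mem_restrictTotalDegree, totalDegree_mul_of_isDomain hg hw] at h
  rw [mem_restrictTotalDegree]
  omega

theorem koszulSyzygy_injective (hg : g ≠ 0) : Injective (koszulSyzygy f g n) := by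
  intro w w' h
  have := congrArg (fun x => (x.1 : MvPolynomial σ R)) h
  simp only [coe_koszulSyzygy_apply_fst] at this
  exact Subtype.ext (mul_left_cancel₀ hg this)

theorem exact_koszulSyzygy_koszulSum [UniqueFactorizationMonoid R] (hg : g ≠ 0)
    (hfg : IsRelPrime f g) : Exact (koszulSyzygy f g n) (koszulSum f g n) := by
  intro x
  constructor
  · obtain ⟨u, v⟩ := x
    intro huv
    have huv : f * u + g * v = 0 := congrArg Subtype.val huv
    obtain ⟨w, hw⟩ : g ∣ (u : MvPolynomial σ R) :=
      hfg.symm.dvd_of_dvd_mul_left ⟨-v, by linear_combination huv⟩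
    have hv : (v : MvPolynomial σ R) = -(f * w) :=
      mul_left_cancel₀ hg (by linear_combination huv - f * hw)
    have hw_deg : w ∈ restrictTotalDegree σ R n :=
      mem_restrictTotalDegree_of_mul_mem n hg (hw ▸ u.2)
    exact ⟨⟨w, hw_deg⟩, Prod.ext (Subtype.ext hw.symm) (Subtype.ext hv.symm)⟩
  · rintro ⟨w, rfl⟩
    exact Subtype.ext (by simp only [coe_koszulSum_apply, coe_koszulSyzygy_apply_fst,
      coe_koszulSyzygy_apply_snd, ZeroMemClass.coe_zero]; ring)

end Koszul

section Interpolation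

variable {σ R : Type*} [CommRing R]

noncomputable def evalOn (S : Finset (σ → R)) : MvPolynomial σ R →ₗ[R] (S → R) :=
  LinearMap.pi fun p => (aeval (p : σ → R)).toLinearMap

@[simp] theorem evalOn_apply (S : Finset (σ → R)) (u : MvPolynomial σ R) (p : S) :
    evalOn S u p = eval (p : σ → R) u :=
  rfl

theorem exists_totalDegree_lt_eval_ne_zero_eval_eq_zero [IsDomain R] {S : Finset (σ → R)}
    {p : σ → R} (hp : p ∈ S) :
    ∃ h : MvPolynomial σ R, h.totalDegree < S.card ∧ eval p h ≠ 0 ∧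
      ∀ q ∈ S, q ≠ p → eval q h = 0 := by
  classical
  have hsep : ∀ q : σ → R, ∃ ℓ : MvPolynomial σ R,
      ℓ.totalDegree ≤ 1 ∧ eval q ℓ = 0 ∧ (q ≠ p → eval p ℓ ≠ 0) := fun q => by
    by_cases hq : q = p
    · exact ⟨0, by simp, by simp, fun h => (h hq).elim⟩
    obtain ⟨i, hi⟩ := Function.ne_iff.mp hq
    exact ⟨X i - C (q i), (totalDegree_sub_C_le _ _).trans (totalDegree_X i).le, by simp,
      fun _ => by simpa [sub_eq_zero] using hi.symm⟩
  choose ℓ hℓ_deg hℓ_zero hℓ_ne using hsep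
  refine ⟨∏ q ∈ S.erase p, ℓ q, ?_, ?_, fun q hq hqp => ?_⟩
  · calc (∏ q ∈ S.erase p, ℓ q).totalDegree ≤ ∑ q ∈ S.erase p, (ℓ q).totalDegree :=
          totalDegree_finsetProd _ _
      _ ≤ ∑ q ∈ S.erase p, 1 := Finset.sum_le_sum fun q _ => hℓ_deg q
      _ < S.card := by simpa using Finset.card_erase_lt_of_mem hp
  · rw [map_prod]
    exact Finset.prod_ne_zero_iff.mpr fun q hq => hℓ_ne q (Finset.ne_of_mem_erase hq)
  · rw [map_prod]
    exact Finset.prod_eq_zero (Finset.mem_erase.mpr ⟨hqp, hq⟩) (hℓ_zero q)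

theorem surjective_evalOn_domRestrict {K : Type*} [Field K] {S : Finset (σ → K)} {d : ℕ}
    (hS : S.card ≤ d + 1) :
    Surjective ((evalOn S).domRestrict (restrictTotalDegree σ K d)) := by
  classical
  rw [← LinearMap.range_eq_top, ← top_le_iff, ← (Pi.basisFun K S).span_eq, Submodule.span_le]
  rintro _ ⟨p, rfl⟩
  obtain ⟨h, hdeg, hp, hq⟩ := exists_totalDegree_lt_eval_ne_zero_eval_eq_zero p.2
  have hmem : h ∈ restrictTotalDegree σ K d := by
    rw [mem_restrictTotalDegree]
    omega
  refine ⟨(eval (p : σ → K) h)⁻¹ • ⟨h, hmem⟩, ?_⟩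
  rw [Pi.basisFun_apply]
  ext q
  rcases eq_or_ne q p with rfl | hqp
  · simp [hp]
  · simp [hq q q.2 (Subtype.coe_ne_coe.mpr hqp), hqp]

end Interpolation

theorem finrank_restrictTotalDegree (σ K : Type*) [Field K] [Finite σ] (d : ℕ) :
    finrank K (restrictTotalDegree σ K d) = Nat.card {n : σ →₀ ℕ | n.degree ≤ d} :=
  finrank_eq_nat_card_basis (basisRestrictSupport K _)

theorem two_mul_finrank_restrictTotalDegree_fin_two (K : Type*) [Field K] (d : ℕ) :
    2 * finrank K (restrictTotalDegree (Fin 2) K d) = (d + 1) * (d + 2) := by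
  rw [finrank_restrictTotalDegree, ← Nat.two_mul_card_add_le d]
  congr 1
  refine Nat.card_congr (Equiv.subtypeEquiv (Finsupp.equivFunOnFinite.trans (finTwoArrowEquiv ℕ))
    fun n => ?_)
  simp [Finsupp.degree_eq_sum, Fin.sum_univ_two]

theorem card_le_totalDegree_mul_totalDegree {K : Type*} [Field K]
    {f g : MvPolynomial (Fin 2) K} (hg : g ≠ 0) (hfg : IsRelPrime f g) {S : Finset (Fin 2 → K)}
    (hS : ∀ p ∈ S, eval p f = 0 ∧ eval p g = 0) :
    S.card ≤ f.totalDegree * g.totalDegree := by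
  set n := S.card
  have hvanish : (evalOn S).domRestrict _ ∘ₗ koszulSum f g n = 0 := by
    refine LinearMap.ext fun x => ?_
    ext p
    simp [(hS p p.2).1, (hS p p.2).2]
  have key := finrank_add_finrank_le_of_exact_of_comp_eq_zero (koszulSyzygy_injective n hg)
    (exact_koszulSyzygy_koszulSum n hg hfg) hvanish
    (surjective_evalOn_domRestrict (by omega))
  rw [finrank_pi, Fintype.card_coe, finrank_prod] at key
  have h₀ := two_mul_finrank_restrictTotalDegree_fin_two K n
  have h₁ := two_mul_finrank_restrictTotalDegree_fin_two K (n + f.totalDegree)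
  have h₂ := two_mul_finrank_restrictTotalDegree_fin_two K (n + g.totalDegree)
  have h₃ := two_mul_finrank_restrictTotalDegree_fin_two K (n + f.totalDegree + g.totalDegree)
  nlinarith

end MvPolynomial

theorem bezout_plane_curves_general {K : Type*} [Field K]
    (f g : MvPolynomial (Fin 2) K) (hg : g ≠ 0)
    (hcop : ∀ d : MvPolynomial (Fin 2) K, d ∣ f → d ∣ g → IsUnit d) :
    {p : Fin 2 → K | MvPolynomial.eval p f = 0 ∧ MvPolynomial.eval p g = 0}.Finite ∧
    {p : Fin 2 → K | MvPolynomial.eval p f = 0 ∧ MvPolynomial.eval p g = 0}.ncard ≤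
      f.totalDegree * g.totalDegree :=
  Set.finite_and_ncard_le_of_forall_finset_card_le fun _ hS =>
    card_le_totalDegree_mul_totalDegree hg (fun _ => hcop _) fun _ hp => hS hp

/-- Bézout's theorem (1764) on plane curves: two nonzero polynomials in two variables
over an algebraically closed field, having no nonunit common divisor, have a finite
common zero set of cardinality at most the product of their total degrees. -/
theorem bezout_plane_curves {K : Type*} [Field K] [IsAlgClosed K]
    (f g : MvPolynomial (Fin 2) K) (hf : f ≠ 0) (hg : g ≠ 0)
    (hcop : ∀ d : MvPolynomial (Fin 2) K, d ∣ f → d ∣ g → IsUnit d) :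
    {p : Fin 2 → K | MvPolynomial.eval p f = 0 ∧ MvPolynomial.eval p g = 0}.Finite ∧
    {p : Fin 2 → K | MvPolynomial.eval p f = 0 ∧ MvPolynomial.eval p g = 0}.ncard ≤
      f.totalDegree * g.totalDegree :=
  bezout_plane_curves_general f g hg hcop
end

section
/- Let R be a commutative ring and let P, Q be polynomials in the variable x whose coefficients are polynomials in a second variable y (elements of Polynomial (Polynomial R)). Let m = natDegree P and m′ = natDegree Q, and let p, p′ be natural numbers such that for every natural number j the degree in y of the coefficient of xʲ in P is at most p + (m − j), and the degree in y of the coefficient of xʲ in Q is at most p′ + (m′ − j). Then the degree in y of the resultant Res(P, Q) satisfies natDegree(Res(P, Q)) ≤ m·m′ + m·p′ + m′·p. -/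
/-!
Weight row `r` of the Sylvester matrix by `p + m + r` if it is a row of `P` and by `p' + r` if it
is a row of `Q`, and column `c` by `c`. Every nonzero entry then has `y`-degree at most
row weight minus column weight, so each term of the Leibniz expansion of the determinant has
degree at most the sum of the row weights minus the sum of the column weights, which is
`m' (p + m) + m p'`.
-/

open Polynomial

/-- The Sylvester matrix of two polynomials `P` and `Q` over a commutative ring:
a square matrix of size `natDegree P + natDegree Q` whose first `natDegree Q` rows
are the coefficient vectors of `X ^ i * P` (for `0 ≤ i < natDegree Q`) and whose
remaining rows are the coefficient vectors of `X ^ i * Q` (for `0 ≤ i < natDegree P`). -/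
noncomputable def sylvesterMatrix {R : Type*} [CommRing R] (P Q : Polynomial R) :
    Matrix (Fin (P.natDegree + Q.natDegree)) (Fin (P.natDegree + Q.natDegree)) R :=
  fun i j =>
    if (i : ℕ) < Q.natDegree then (X ^ (i : ℕ) * P).coeff j
    else (X ^ ((i : ℕ) - Q.natDegree) * Q).coeff j

noncomputable def resultant {R : Type*} [CommRing R] (P Q : Polynomial R) : R :=
  (sylvesterMatrix P Q).det

theorem Fin.sum_ite_val_lt {M : Type*} [AddCommMonoid M] (m m' : ℕ) (A B : M) :
    ∑ r : Fin (m + m'), (if (r : ℕ) < m' then A else B) = m' • A + m • B := by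
  rw [Fin.sum_univ_eq_sum_range (fun r => if r < m' then A else B), add_comm m m',
    Finset.sum_range_add, Finset.sum_ite_of_true fun x hx => Finset.mem_range.mp hx]
  simp

theorem Matrix.natDegree_det_le_of_natDegree_apply_le {n R : Type*} [Fintype n]
    [DecidableEq n] [CommRing R] (M : Matrix n n R[X]) (a b : n → ℤ)
    (hM : ∀ i j, M i j ≠ 0 → ((M i j).natDegree : ℤ) ≤ a i - b j) {N : ℕ}
    (hN : ∑ i, a i - ∑ j, b j ≤ N) :
    M.det.natDegree ≤ N := by
  rw [Matrix.det_apply]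
  refine natDegree_sum_le_of_forall_le _ _ fun σ _ => (natDegree_smul_le _ _).trans ?_
  by_cases hzero : ∏ i, M (σ i) i = 0
  · simp [hzero]
  have hne : ∀ i, M (σ i) i ≠ 0 := fun i hi =>
    hzero (Finset.prod_eq_zero (Finset.mem_univ i) hi)
  refine (natDegree_prod_le _ _).trans ?_
  have hsum : ∑ i, ((M (σ i) i).natDegree : ℤ) ≤ N :=
    calc ∑ i, ((M (σ i) i).natDegree : ℤ)
        ≤ ∑ i, (a (σ i) - b i) := Finset.sum_le_sum fun i _ => hM _ _ (hne i)
      _ = ∑ i, a i - ∑ j, b j := by rw [Finset.sum_sub_distrib, Equiv.sum_comp σ a]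
      _ ≤ N := hN
  exact_mod_cast hsum

theorem Polynomial.natDegree_coeff_X_pow_mul_le {R : Type*} [Semiring R] {P : R[X][X]}
    {p : ℕ} (hP : ∀ j, (P.coeff j).natDegree ≤ p + (P.natDegree - j)) {k c : ℕ}
    (h : (X ^ k * P).coeff c ≠ 0) :
    (((X ^ k * P).coeff c).natDegree : ℤ) ≤ p + P.natDegree + k - c := by
  rw [coeff_X_pow_mul'] at h ⊢
  split_ifs at h ⊢
  · have hc : c - k ≤ P.natDegree := le_natDegree_of_ne_zero h
    have := hP (c - k)
    omega
  · exact absurd rfl h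

theorem natDegree_sylvesterMatrix_apply_le {R : Type*} [CommRing R] {P Q : R[X][X]}
    {p p' : ℕ} (hP : ∀ j, (P.coeff j).natDegree ≤ p + (P.natDegree - j))
    (hQ : ∀ j, (Q.coeff j).natDegree ≤ p' + (Q.natDegree - j))
    {r c : Fin (P.natDegree + Q.natDegree)} (h : sylvesterMatrix P Q r c ≠ 0) :
    ((sylvesterMatrix P Q r c).natDegree : ℤ) ≤
      ((r : ℤ) + if (r : ℕ) < Q.natDegree then (p + P.natDegree : ℤ) else (p' : ℤ)) - c := by
  unfold sylvesterMatrix at h ⊢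
  split_ifs at h ⊢
  · have := natDegree_coeff_X_pow_mul_le hP h
    omega
  · have := natDegree_coeff_X_pow_mul_le hQ h
    omega

/-- Bézout (1764): if `P`, `Q` are polynomials in `x` of degrees `m`, `m′` whose
coefficients are polynomials in `y`, the coefficient of `x ^ j` in `P` (resp. `Q`)
having degree at most `p + (m - j)` (resp. `p′ + (m′ - j)`) in `y`, then the
resultant (eliminating `x`) is a polynomial in `y` of degree at most
`m·m′ + m·p′ + m′·p`. -/
theorem natDegree_resultant_le {R : Type*} [CommRing R]
    (P Q : Polynomial (Polynomial R)) (p p' : ℕ)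
    (hP : ∀ j : ℕ, (P.coeff j).natDegree ≤ p + (P.natDegree - j))
    (hQ : ∀ j : ℕ, (Q.coeff j).natDegree ≤ p' + (Q.natDegree - j)) :
    (_root_.resultant P Q).natDegree ≤
      P.natDegree * Q.natDegree + P.natDegree * p' + Q.natDegree * p := by
  rw [_root_.resultant]
  refine Matrix.natDegree_det_le_of_natDegree_apply_le _
    (fun r : Fin (P.natDegree + Q.natDegree) =>
      (r : ℤ) + if (r : ℕ) < Q.natDegree then (p + P.natDegree : ℤ) else (p' : ℤ))
    (fun c => c) (fun _ _ h => natDegree_sylvesterMatrix_apply_le hP hQ h) ?_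
  rw [Finset.sum_add_distrib, add_sub_cancel_left, Fin.sum_ite_val_lt, nsmul_eq_mul,
    nsmul_eq_mul]
  push_cast
  linarith
end

section
/- Let K be a field and let P, Q be polynomials over K with natDegree P ≥ 1 and natDegree Q ≥ 1. Then the resultant Res(P, Q) equals 0 if and only if P and Q have a common divisor of degree at least 1, i.e. there exists a polynomial D with 1 ≤ natDegree D, D ∣ P and D ∣ Q. -/
/-!
The rows of `sylvesterMatrix P Q` are the columns of Mathlib's `Polynomial.sylvester Q P`, so
`resultant P Q` is Mathlib's `Polynomial.resultant Q P`, which over a field vanishes exactly when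
`Q` and `P` are not coprime. In a principal ideal domain, coprimality means that every common
divisor is a unit, and a divisor of a nonzero polynomial over a field is a unit exactly when it
has degree zero.
-/

open Polynomial

theorem Polynomial.coeff_X_pow_mul_eq_ite_mem_Icc {R : Type*} [Semiring R] (p : R[X]) (k d : ℕ) :
    (X ^ k * p).coeff d = if d ∈ Set.Icc k (k + p.natDegree) then p.coeff (d - k) else 0 := by
  rw [coeff_X_pow_mul']
  split_ifs with hk hd hd
  · rfl
  · exact coeff_eq_zero_of_natDegree_lt (by simp only [Set.mem_Icc] at hd; omega)
  · exact absurd hd.1 hk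
  · rfl

theorem Polynomial.one_le_natDegree_of_dvd_of_not_isUnit {K : Type*} [Field K] {P D : K[X]}
    (hP : P ≠ 0) (hDP : D ∣ P) (hD : ¬IsUnit D) : 1 ≤ D.natDegree := by
  rw [Nat.one_le_iff_ne_zero]
  contrapose! hD
  rw [isUnit_iff_degree_eq_zero, degree_eq_natDegree (ne_zero_of_dvd_ne_zero hP hDP), hD]
  rfl

theorem Polynomial.not_isCoprime_iff_exists_dvd {K : Type*} [Field K] {P : K[X]} (hP : P ≠ 0)
    (Q : K[X]) : ¬IsCoprime P Q ↔ ∃ D : K[X], 1 ≤ D.natDegree ∧ D ∣ P ∧ D ∣ Q := by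
  rw [← isRelPrime_iff_isCoprime, IsRelPrime]
  push Not
  refine exists_congr fun D => ⟨fun ⟨hDP, hDQ, hD⟩ => ⟨?_, hDP, hDQ⟩,
    fun ⟨hD, hDP, hDQ⟩ => ⟨hDP, hDQ, not_isUnit_of_natDegree_pos D hD⟩⟩
  exact one_le_natDegree_of_dvd_of_not_isUnit hP hDP hD

theorem sylvesterMatrix_eq_reindex_transpose_sylvester {R : Type*} [CommRing R] (P Q : R[X]) :
    sylvesterMatrix P Q = (Q.sylvester P Q.natDegree P.natDegree).transpose.reindex
      (finCongr (add_comm _ _)) (finCongr (add_comm _ _)) := by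
  ext i j
  obtain ⟨i, rfl⟩ := (finCongr (add_comm Q.natDegree P.natDegree)).surjective i
  induction i using Fin.addCases <;>
    simp [sylvesterMatrix, sylvester, coeff_X_pow_mul_eq_ite_mem_Icc]

theorem resultant_eq_polynomial_resultant_swap {R : Type*} [CommRing R] (P Q : R[X]) :
    _root_.resultant P Q = Q.resultant P := by
  rw [_root_.resultant, sylvesterMatrix_eq_reindex_transpose_sylvester, Matrix.det_reindex_self,
    Matrix.det_transpose, Polynomial.resultant]

theorem resultant_eq_zero_iff_common_factor_general {K : Type*} [Field K]
    (P Q : Polynomial K) (hP : 1 ≤ P.natDegree) :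
    _root_.resultant P Q = 0 ↔ ∃ D : Polynomial K, 1 ≤ D.natDegree ∧ D ∣ P ∧ D ∣ Q := by
  have hP0 : P ≠ 0 := ne_zero_of_natDegree_gt hP
  rw [resultant_eq_polynomial_resultant_swap, Polynomial.resultant_eq_zero_iff, isCoprime_comm,
    ← not_isCoprime_iff_exists_dvd hP0]
  simp [hP0]

/-- Over a field, the resultant of two polynomials of degree at least one vanishes
if and only if they have a common divisor of degree at least one. -/
theorem resultant_eq_zero_iff_common_factor {K : Type*} [Field K]
    (P Q : Polynomial K) (hP : 1 ≤ P.natDegree) (hQ : 1 ≤ Q.natDegree) :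
    _root_.resultant P Q = 0 ↔ ∃ D : Polynomial K, 1 ≤ D.natDegree ∧ D ∣ P ∧ D ∣ Q :=
  resultant_eq_zero_iff_common_factor_general P Q hP
end

section
/- Let K be a field and let P, Q be polynomials over K with m = natDegree P ≥ 1 and m′ = natDegree Q ≥ 1. Then the following are equivalent: (i) there exist nonzero polynomials L₁ and L₂ over K with natDegree L₁ ≤ m′ − 1 and natDegree L₂ ≤ m − 1 such that L₁·P + L₂·Q = 0; (ii) there exists a polynomial D over K with 1 ≤ natDegree D such that D ∣ P and D ∣ Q. -/
/-!
If `L₁ P + L₂ Q = 0` and `P`, `Q` were coprime, then `P ∣ L₂ Q` would force `P ∣ L₂`, which is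
impossible for `L₂ ≠ 0` of smaller degree than `P`; over a field, non-coprime polynomials share a
factor of positive degree (their gcd). Conversely, a common factor `D` gives the syzygy
`(Q / D) P - (P / D) Q = 0`, whose coefficients have degrees lowered by `deg D ≥ 1`.
-/

open Polynomial

namespace Polynomial

section CommRing

variable {R : Type*} [CommRing R] [NoZeroDivisors R]

theorem natDegree_lt_natDegree_mul_left {D Q : R[X]} (hD : 0 < D.natDegree) (hQ : Q ≠ 0) :
    Q.natDegree < (D * Q).natDegree := by
  have hD0 : D ≠ 0 := ne_zero_of_natDegree_gt hD
  rw [natDegree_mul hD0 hQ]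
  omega

theorem not_isCoprime_of_mul_add_mul_eq_zero {P Q L₁ L₂ : R[X]} (hL₂ : L₂ ≠ 0)
    (hdeg : L₂.natDegree < P.natDegree) (h : L₁ * P + L₂ * Q = 0) : ¬IsCoprime P Q := by
  intro hPQ
  have hP_dvd : P ∣ L₂ * Q := ⟨-L₁, by linear_combination h⟩
  exact hL₂ (eq_zero_of_dvd_of_natDegree_lt (hPQ.dvd_of_dvd_mul_right hP_dvd) hdeg)

theorem exists_mul_add_mul_eq_zero_of_dvd {P Q D : R[X]} (hP : P ≠ 0) (hQ : Q ≠ 0)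
    (hD : 0 < D.natDegree) (hDP : D ∣ P) (hDQ : D ∣ Q) :
    ∃ L₁ L₂ : R[X], L₁ ≠ 0 ∧ L₂ ≠ 0 ∧ L₁.natDegree < Q.natDegree ∧
      L₂.natDegree < P.natDegree ∧ L₁ * P + L₂ * Q = 0 := by
  obtain ⟨P', rfl⟩ := hDP
  obtain ⟨Q', rfl⟩ := hDQ
  have hP' : P' ≠ 0 := right_ne_zero_of_mul hP
  have hQ' : Q' ≠ 0 := right_ne_zero_of_mul hQ
  refine ⟨Q', -P', hQ', neg_ne_zero.mpr hP', natDegree_lt_natDegree_mul_left hD hQ', ?_, by ring⟩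
  rw [natDegree_neg]
  exact natDegree_lt_natDegree_mul_left hD hP'

end CommRing

theorem exists_natDegree_pos_dvd_of_not_isCoprime {K : Type*} [Field K] {P Q : K[X]}
    (hP : P ≠ 0) (h : ¬IsCoprime P Q) : ∃ D : K[X], 0 < D.natDegree ∧ D ∣ P ∧ D ∣ Q := by
  by_contra! hnone
  refine h (EuclideanDomain.isCoprime_of_dvd (fun hPQ => hP hPQ.1) fun D hD hD0 hDP => ?_)
  exact hnone D (natDegree_pos_iff_degree_pos.mpr (degree_pos_of_ne_zero_of_nonunit hD0 hD)) hDP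

end Polynomial

/-- The linear-algebraic heart of Bézout's 1764 elimination method: two polynomials
`P`, `Q` of degrees `m, m′ ≥ 1` over a field admit a nontrivial relation
`L₁·P + L₂·Q = 0` with `natDegree L₁ ≤ m′ − 1` and `natDegree L₂ ≤ m − 1`
if and only if they have a common divisor of degree at least one. -/
theorem exists_syzygy_iff_common_factor {K : Type*} [Field K]
    (P Q : Polynomial K) (hP : 1 ≤ P.natDegree) (hQ : 1 ≤ Q.natDegree) :
    (∃ L₁ L₂ : Polynomial K, L₁ ≠ 0 ∧ L₂ ≠ 0 ∧
        L₁.natDegree ≤ Q.natDegree - 1 ∧ L₂.natDegree ≤ P.natDegree - 1 ∧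
        L₁ * P + L₂ * Q = 0) ↔
      ∃ D : Polynomial K, 1 ≤ D.natDegree ∧ D ∣ P ∧ D ∣ Q := by
  have hP0 : P ≠ 0 := ne_zero_of_natDegree_gt hP
  have hQ0 : Q ≠ 0 := ne_zero_of_natDegree_gt hQ
  constructor
  · rintro ⟨L₁, L₂, -, hL₂, -, hdeg₂, h⟩
    exact exists_natDegree_pos_dvd_of_not_isCoprime hP0
      (not_isCoprime_of_mul_add_mul_eq_zero hL₂ (by omega) h)
  · rintro ⟨D, hD, hDP, hDQ⟩
    obtain ⟨L₁, L₂, hL₁, hL₂, hdeg₁, hdeg₂, h⟩ :=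
      exists_mul_add_mul_eq_zero_of_dvd hP0 hQ0 hD hDP hDQ
    exact ⟨L₁, L₂, hL₁, hL₂, by omega, by omega, h⟩
end

section
/- Let K be a field and let P, Q be polynomials over K with natDegree P ≥ 1 and natDegree Q ≥ 1. Then P and Q are coprime (IsCoprime P Q) if and only if there exists a unique pair of polynomials (L₁, L₂) over K satisfying L₁·P + L₂·Q = 1, natDegree L₁ < natDegree Q, and natDegree L₂ < natDegree P. -/
/-!
Reducing `L₁` modulo `Q` (and correcting `L₂` by the quotient times `P`) turns any Bézout
identity `L₁ * P + L₂ * Q = 1` into one with `deg L₁ < deg Q`, and comparing degrees in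
`L₂ * Q = 1 - L₁ * P` then forces `deg L₂ < deg P`. Two such pairs satisfy
`(L₁ - L₁') * P = (L₂' - L₂) * Q`, so coprimality gives `Q ∣ L₁ - L₁'`, which is too small in
degree to be nonzero.
-/

open Polynomial

namespace Polynomial

section Domain

variable {R : Type*} [CommRing R] [IsDomain R]

theorem natDegree_lt_of_mul_add_mul_eq_one {P Q L₁ L₂ : R[X]} (h : L₁ * P + L₂ * Q = 1)
    (h₁ : L₁.natDegree < Q.natDegree) (hP : 0 < P.natDegree) :
    L₂.natDegree < P.natDegree := by
  rcases eq_or_ne L₂ 0 with rfl | hL₂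
  · simpa using hP
  have hQ : Q ≠ 0 := ne_zero_of_natDegree_gt h₁
  have hdeg : L₂.natDegree + Q.natDegree ≤ max 0 (L₁.natDegree + P.natDegree) := calc
    L₂.natDegree + Q.natDegree = (1 - L₁ * P).natDegree := by
      rw [← natDegree_mul hL₂ hQ, ← h, add_sub_cancel_left]
    _ ≤ max (1 : R[X]).natDegree (L₁ * P).natDegree := natDegree_sub_le _ _
    _ ≤ max 0 (L₁.natDegree + P.natDegree) := by
      rw [natDegree_one]; exact max_le_max le_rfl natDegree_mul_le
  omega

theorem IsCoprime.eq_of_mul_add_mul_eq {P Q L₁ L₂ M₁ M₂ : R[X]} (hPQ : IsCoprime P Q)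
    (h : L₁ * P + L₂ * Q = M₁ * P + M₂ * Q)
    (hL₁ : L₁.natDegree < Q.natDegree) (hM₁ : M₁.natDegree < Q.natDegree) :
    L₁ = M₁ ∧ L₂ = M₂ := by
  have hdiff : (L₁ - M₁) * P = (M₂ - L₂) * Q := by linear_combination h
  have hdvd : Q ∣ L₁ - M₁ := hPQ.symm.dvd_of_dvd_mul_right ⟨M₂ - L₂, by rw [hdiff, mul_comm]⟩
  have hlt : (L₁ - M₁).natDegree < Q.natDegree :=
    (natDegree_sub_le _ _).trans_lt (max_lt hL₁ hM₁)
  have h₁ : L₁ = M₁ := sub_eq_zero.mp (eq_zero_of_dvd_of_natDegree_lt hdvd hlt)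
  have hQ : Q ≠ 0 := ne_zero_of_natDegree_gt hL₁
  refine ⟨h₁, (sub_eq_zero.mp ?_).symm⟩
  simpa [h₁, hQ] using hdiff.symm

end Domain

theorem IsCoprime.exists_mul_add_mul_eq_one_natDegree_lt {K : Type*} [Field K] {P Q : K[X]}
    (hPQ : IsCoprime P Q) (hQ : 0 < Q.natDegree) :
    ∃ L₁ L₂ : K[X], L₁ * P + L₂ * Q = 1 ∧ L₁.natDegree < Q.natDegree := by
  obtain ⟨a, b, hab⟩ := hPQ
  refine ⟨a % Q, b + a / Q * P, ?_, natDegree_mod_lt a hQ.ne'⟩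
  linear_combination P * EuclideanDomain.mod_add_div a Q + hab

end Polynomial

/-- The 'identity of Bézout' for polynomials over a field: `P` and `Q` (of degree
at least one) are coprime if and only if there is a unique pair `(L₁, L₂)` with
`L₁·P + L₂·Q = 1`, `natDegree L₁ < natDegree Q` and `natDegree L₂ < natDegree P`. -/
theorem isCoprime_iff_existsUnique_bezout_identity {K : Type*} [Field K]
    (P Q : Polynomial K) (hP : 1 ≤ P.natDegree) (hQ : 1 ≤ Q.natDegree) :
    IsCoprime P Q ↔
      ∃! L : Polynomial K × Polynomial K,
        L.1 * P + L.2 * Q = 1 ∧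
        L.1.natDegree < Q.natDegree ∧ L.2.natDegree < P.natDegree := by
  constructor
  · intro hPQ
    obtain ⟨L₁, L₂, hL, hL₁⟩ := hPQ.exists_mul_add_mul_eq_one_natDegree_lt hQ
    refine ⟨(L₁, L₂), ⟨hL, hL₁, natDegree_lt_of_mul_add_mul_eq_one hL hL₁ hP⟩, ?_⟩
    rintro ⟨M₁, M₂⟩ ⟨hM, hM₁, -⟩
    obtain ⟨rfl, rfl⟩ := hPQ.eq_of_mul_add_mul_eq (hM.trans hL.symm) hM₁ hL₁
    rfl
  · rintro ⟨⟨L₁, L₂⟩, ⟨hL, -, -⟩, -⟩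
    exact ⟨L₁, L₂, hL⟩
end

section
/- Let R be a commutative ring and let a, b, c, a′, b′, c′, x be elements of R such that a·x² + b·x + c = 0 and a′·x² + b′·x + c′ = 0. Then (a·b′ − a′·b)·(b·c′ − b′·c) = (a·c′ − a′·c)². -/
/-! Bézout's elimination: the combinations `a′P − aP′` and `(a′x + b′)P − (ax + b)P′` of the two
quadratics cancel the terms of degree at least two, leaving two linear equations with the common
root `x`. The determinant of two linear equations with a common root vanishes, and for these two
equations that determinant is the stated identity. -/

section CommRing

variable {R : Type*} [CommRing R]

theorem mul_eq_mul_of_common_root_linear {p q r s x : R} (h₁ : p * x + q = 0)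
    (h₂ : r * x + s = 0) : p * s = q * r := by
  linear_combination p * h₂ - r * h₁

variable {a b c a' b' c' x : R}

theorem linear_eq_of_common_root_quadratics_elim_sq (h₁ : a * x ^ 2 + b * x + c = 0)
    (h₂ : a' * x ^ 2 + b' * x + c' = 0) : (a' * b - a * b') * x + (a' * c - a * c') = 0 := by
  linear_combination a' * h₁ - a * h₂

theorem linear_eq_of_common_root_quadratics_elim_cube (h₁ : a * x ^ 2 + b * x + c = 0)
    (h₂ : a' * x ^ 2 + b' * x + c' = 0) : (a' * c - a * c') * x + (b' * c - b * c') = 0 := by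
  linear_combination (a' * x + b') * h₁ - (a * x + b) * h₂

end CommRing

/-- Bézout's 1764 resultant of two quadratic equations: if `x` is a common root of
`a·x² + b·x + c = 0` and `a′·x² + b′·x + c′ = 0`, then
`(a·b′ − a′·b)·(b·c′ − b′·c) = (a·c′ − a′·c)²`. -/
theorem bezoutian_quadratics {R : Type*} [CommRing R] (a b c a' b' c' x : R)
    (h1 : a * x ^ 2 + b * x + c = 0) (h2 : a' * x ^ 2 + b' * x + c' = 0) :
    (a * b' - a' * b) * (b * c' - b' * c) = (a * c' - a' * c) ^ 2 := by
  have hdet := mul_eq_mul_of_common_root_linear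
    (linear_eq_of_common_root_quadratics_elim_sq h1 h2)
    (linear_eq_of_common_root_quadratics_elim_cube h1 h2)
  linear_combination hdet
end

section
/- Let R be a commutative ring, m a natural number, and f, g polynomials over R with natDegree f ≤ m and natDegree g ≤ m. For a natural number i with 1 ≤ i ≤ m, define the truncations F = ∑_{j=0}^{i−1} C(coeff f (m−j))·X^{i−1−j} and G = ∑_{j=0}^{i−1} C(coeff g (m−j))·X^{i−1−j}. Then natDegree (F·g − G·f) ≤ m − 1. -/
/-!
Write `n = m + 1 - i`. Since `f` has degree at most `m`, it splits as `f = F * X ^ n + S` where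
`F` is the `i`-th head of `f` and `S` collects the monomials of degree `< n`; likewise `g = G * X ^ n + T`. The leading parts cancel in `F * g - G * f`,
which therefore equals `F * T - G * S`, of degree at most `(i - 1) + (m - i) = m - 1`.
-/

open Polynomial Finset

theorem mul_sub_mul_eq_of_eq_mul_add {A : Type*} [CommRing A] {p q P Q S T x : A}
    (hp : p = P * x + S) (hq : q = Q * x + T) : P * q - Q * p = P * T - Q * S := by
  subst hp hq
  ring

namespace Polynomial

variable {R : Type*} [Semiring R]

/-- The `i`-th head of `f`, viewed as a polynomial of formal degree `m`: its top `i` coefficients. -/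
noncomputable def bezoutHead (m i : ℕ) (f : R[X]) : R[X] :=
  ∑ j ∈ range i, C (f.coeff (m - j)) * X ^ (i - 1 - j)

theorem natDegree_bezoutHead_le (m i : ℕ) (f : R[X]) : (bezoutHead m i f).natDegree ≤ i - 1 :=
  natDegree_sum_le_of_forall_le _ _ fun j _ => (natDegree_C_mul_X_pow_le _ _).trans (by omega)

theorem natDegree_sum_range_C_mul_X_pow_le (n : ℕ) (f : R[X]) :
    (∑ k ∈ range n, C (f.coeff k) * X ^ k).natDegree ≤ n - 1 :=
  natDegree_sum_le_of_forall_le _ _ fun k hk =>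
    (natDegree_C_mul_X_pow_le _ _).trans (by rw [mem_range] at hk; omega)

theorem bezoutHead_mul_X_pow {m i : ℕ} (him : i ≤ m + 1) (f : R[X]) :
    bezoutHead m i f * X ^ (m + 1 - i) = ∑ j ∈ range i, C (f.coeff (m - j)) * X ^ (m - j) := by
  rw [bezoutHead, sum_mul]
  refine sum_congr rfl fun j hj => ?_
  rw [mem_range] at hj
  rw [mul_assoc, ← pow_add]
  congr 2
  omega

theorem eq_bezoutHead_mul_X_pow_add {m i : ℕ} (him : i ≤ m + 1) {f : R[X]} (hf : f.natDegree ≤ m) :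
    f = bezoutHead m i f * X ^ (m + 1 - i) + ∑ k ∈ range (m + 1 - i), C (f.coeff k) * X ^ k := by
  have hsplit := f.as_sum_range_C_mul_X_pow' (Nat.lt_add_one_of_le hf)
  rw [show m + 1 = (m + 1 - i) + i by omega, sum_range_add] at hsplit
  have hhead : ∑ j ∈ range i, C (f.coeff (m - j)) * X ^ (m - j) =
      ∑ k ∈ range i, C (f.coeff (m + 1 - i + k)) * X ^ (m + 1 - i + k) := by
    rw [← sum_range_reflect]
    refine sum_congr rfl fun k hk => ?_
    rw [mem_range] at hk
    rw [show m - (i - 1 - k) = m + 1 - i + k by omega]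
  rwa [bezoutHead_mul_X_pow him, hhead, add_comm]

end Polynomial

/-- The key lemma of Bézout's 1764 method for two equations of the same degree `m`:
multiplying `g` by the `i`-th 'head' polynomial of `f` and `f` by the `i`-th head of
`g` and taking the difference produces a polynomial of degree at most `m − 1`. -/
theorem natDegree_bezout_row_le {R : Type*} [CommRing R] (m : ℕ) (f g : Polynomial R)
    (hf : f.natDegree ≤ m) (hg : g.natDegree ≤ m) (i : ℕ) (hi : 1 ≤ i) (him : i ≤ m) :
    ((∑ j ∈ Finset.range i, C (f.coeff (m - j)) * X ^ (i - 1 - j)) * g -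
        (∑ j ∈ Finset.range i, C (g.coeff (m - j)) * X ^ (i - 1 - j)) * f).natDegree
      ≤ m - 1 := by
  change (bezoutHead m i f * g - bezoutHead m i g * f).natDegree ≤ m - 1
  rw [mul_sub_mul_eq_of_eq_mul_add (eq_bezoutHead_mul_X_pow_add (by omega) hf)
    (eq_bezoutHead_mul_X_pow_add (by omega) hg)]
  have hdeg : ∀ p q : R[X],
      (bezoutHead m i p * ∑ k ∈ range (m + 1 - i), C (q.coeff k) * X ^ k).natDegree ≤ m - 1 :=
    fun p q => natDegree_mul_le.trans <| (add_le_add (natDegree_bezoutHead_le m i p)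
      (natDegree_sum_range_C_mul_X_pow_le _ q)).trans (by omega)
  exact (natDegree_sub_le _ _).trans (max_le (hdeg f g) (hdeg g f))
end

section
/- Let R be a commutative ring and let a, b, c, d, e, f, d′, e′, f′, d″, e″, f″, x, y be elements of R such that a·x² + b·x·y + c·y² + d·x + e·y + f = 0, d′·x + e′·y + f′ = 0, and d″·x + e″·y + f″ = 0. Then, writing (e′f″) = e′·f″ − e″·f′, (d′f″) = d′·f″ − d″·f′, (d′e″) = d′·e″ − d″·e′, one has a·(e′f″)² − b·(e′f″)·(d′f″) + c·(d′f″)² + (d′e″)·(d·(e′f″) − e·(d′f″) + f·(d′e″)) = 0. -/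
/-!
By Cramer's rule the two linear equations give `Δ x = (e′f″)` and `Δ y = -(d′f″)` with
`Δ = (d′e″)`. Multiplying the quadratic equation by `Δ²` expresses it through `Δ x`, `Δ y`
and `Δ` alone, i.e. as the homogenized quadratic evaluated at `(Δ x, Δ y, Δ)`; substituting
the determinants yields the equation of condition.
-/

section
variable {R : Type*} [CommRing R]

theorem det_mul_fst_eq_of_linear_system {d' e' f' d'' e'' f'' x y : R}
    (h' : d' * x + e' * y + f' = 0) (h'' : d'' * x + e'' * y + f'' = 0) :
    (d' * e'' - d'' * e') * x = e' * f'' - e'' * f' := by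
  linear_combination e'' * h' - e' * h''

theorem det_mul_snd_eq_of_linear_system {d' e' f' d'' e'' f'' x y : R}
    (h' : d' * x + e' * y + f' = 0) (h'' : d'' * x + e'' * y + f'' = 0) :
    (d' * e'' - d'' * e') * y = -(d' * f'' - d'' * f') := by
  linear_combination d' * h'' - d'' * h'

theorem homogenized_quadratic_eq_zero {a b c d e f x y Δ X Y : R}
    (h : a * x ^ 2 + b * x * y + c * y ^ 2 + d * x + e * y + f = 0)
    (hX : Δ * x = X) (hY : Δ * y = Y) :
    a * X ^ 2 + b * X * Y + c * Y ^ 2 + Δ * (d * X + e * Y + f * Δ) = 0 := by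
  subst hX hY
  linear_combination Δ ^ 2 * h

end

/-- Bézout's 1779 (second method) resultant of a quadratic and two linear equations
in two unknowns: any common solution `(x, y)` satisfies the displayed equation of
condition built from the 2×2 determinants `(e′f″)`, `(d′f″)`, `(d′e″)` and the 3×3
determinant `d·(e′f″) − e·(d′f″) + f·(d′e″)`. -/
theorem bezout_condition_quadratic_two_linear {R : Type*} [CommRing R]
    (a b c d e f d' e' f' d'' e'' f'' x y : R)
    (h1 : a * x ^ 2 + b * x * y + c * y ^ 2 + d * x + e * y + f = 0)
    (h2 : d' * x + e' * y + f' = 0)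
    (h3 : d'' * x + e'' * y + f'' = 0) :
    a * (e' * f'' - e'' * f') ^ 2
      - b * (e' * f'' - e'' * f') * (d' * f'' - d'' * f')
      + c * (d' * f'' - d'' * f') ^ 2
      + (d' * e'' - d'' * e') *
        (d * (e' * f'' - e'' * f') - e * (d' * f'' - d'' * f')
          + f * (d' * e'' - d'' * e')) = 0 := by
  have hom := homogenized_quadratic_eq_zero h1
    (det_mul_fst_eq_of_linear_system h2 h3) (det_mul_snd_eq_of_linear_system h2 h3)
  linear_combination hom
end

section
/- Let n, T be natural numbers, k ≤ n, and A : Fin k → ℕ. Then, as an identity of integers, the number of functions d : Fin n → ℕ with ∑ᵢ d(i) ≤ T and d(i) < A(i) for every index i among the first k coordinates equals ∑_{S ⊆ Fin k} (−1)^{|S|} · N(T − ∑_{i∈S} A(i)), where N(t) denotes (t + n).choose n when ∑_{i∈S} A(i) ≤ T and 0 otherwise. -/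
open Finset

/-- The finset of exponent vectors in `n` variables of total degree at most `T`. -/
private def degF (n T : ℕ) : Finset (Fin n → ℕ) :=
  (Fintype.piFinset fun _ : Fin n => Finset.range (T + 1)).filter fun d => ∑ i, d i ≤ T

private lemma mem_degF {n T : ℕ} {d : Fin n → ℕ} : d ∈ degF n T ↔ ∑ i, d i ≤ T := by
  simp only [degF, mem_filter, Fintype.mem_piFinset, mem_range, Nat.lt_succ_iff]
  exact ⟨fun h => h.2, fun h =>
    ⟨fun i => le_trans (Finset.single_le_sum (fun i _ => Nat.zero_le _) (mem_univ i)) h, h⟩⟩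

private lemma card_degF (n : ℕ) : ∀ T : ℕ, (degF n T).card = (T + n).choose n := by
  induction n with
  | zero =>
    intro T
    have h0 : degF 0 T = {fun i => i.elim0} := by
      ext d
      simp only [mem_degF, mem_singleton]
      constructor
      · intro _; exact funext fun i => i.elim0
      · intro _; simp
    simp [h0]
  | succ n ih =>
    intro T
    have key : (degF (n + 1) T).card =
        ((Finset.range (T + 1)).sigma fun j => degF n (T - j)).card := by
      refine card_bij' (fun d _ => (⟨d 0, Fin.tail d⟩ : Σ _ : ℕ, Fin n → ℕ))
        (fun p _ => Fin.cons p.1 p.2) ?_ ?_ ?_ ?_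
      · intro d hd
        rw [mem_degF, Fin.sum_univ_succ] at hd
        simp only [mem_sigma, mem_range, mem_degF]
        refine ⟨by omega, ?_⟩
        calc ∑ i, Fin.tail d i = ∑ i : Fin n, d i.succ := rfl
          _ ≤ T - d 0 := by omega
      · intro p hp
        rw [mem_sigma, mem_range, mem_degF] at hp
        rw [mem_degF, Fin.sum_univ_succ]
        simp only [Fin.cons_zero, Fin.cons_succ]
        obtain ⟨h1, h2⟩ := hp
        omega
      · intro d _
        exact Fin.cons_self_tail d
      · intro p _
        simp
    rw [key, card_sigma]
    have : ∀ j ∈ Finset.range (T + 1), (degF n (T - j)).card = (T - j + n).choose n := by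
      intro j _
      exact ih (T - j)
    rw [Finset.sum_congr rfl this]
    have hre : ∑ j ∈ Finset.range (T + 1), (T - j + n).choose n
        = ∑ j ∈ Finset.range (T + 1), (j + n).choose n := by
      rw [← Finset.sum_range_reflect]
      apply Finset.sum_congr rfl
      intro j hj
      rw [mem_range] at hj
      congr 2
      omega
    rw [hre, Nat.sum_range_add_choose]
    rfl

private lemma card_G (n T k : ℕ) (hk : k ≤ n) (A : Fin k → ℕ) (S : Finset (Fin k)) :
    ((degF n T).filter fun d => ∀ i ∈ S, A i ≤ d (Fin.castLE hk i)).card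
      = if (∑ i ∈ S, A i) ≤ T then ((T - ∑ i ∈ S, A i) + n).choose n else 0 := by
  by_cases hS : (∑ i ∈ S, A i) ≤ T
  · rw [if_pos hS, ← card_degF n (T - ∑ i ∈ S, A i)]
    set B : Fin n → ℕ := fun j => ∑ i ∈ S.filter (fun i => Fin.castLE hk i = j), A i with hB
    have hBsum : ∑ j, B j = ∑ i ∈ S, A i :=
      Finset.sum_fiberwise_of_maps_to (fun i _ => mem_univ _) A
    have hBcast : ∀ i ∈ S, B (Fin.castLE hk i) = A i := by
      intro i hi
      have hfil : S.filter (fun i' => Fin.castLE hk i' = Fin.castLE hk i) = {i} := by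
        ext i'
        simp only [mem_filter, mem_singleton]
        constructor
        · rintro ⟨_, h⟩
          exact Fin.castLE_injective hk h
        · rintro rfl; exact ⟨hi, rfl⟩
      show ∑ i' ∈ S.filter (fun i' => Fin.castLE hk i' = Fin.castLE hk i), A i' = A i
      rw [hfil, sum_singleton]
    have hBle : ∀ d : Fin n → ℕ, (∀ i ∈ S, A i ≤ d (Fin.castLE hk i)) → ∀ j, B j ≤ d j := by
      intro d hd j
      by_cases h : ∃ i ∈ S, Fin.castLE hk i = j
      · obtain ⟨i, hi, rfl⟩ := h
        rw [hBcast i hi]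
        exact hd i hi
      · have hfil : S.filter (fun i => Fin.castLE hk i = j) = ∅ := by
          ext i'
          simp only [mem_filter, notMem_empty, iff_false, not_and]
          intro h1 h2
          exact h ⟨i', h1, h2⟩
        simp [hB, hfil]
    apply card_bij' (fun d _ => fun j => d j - B j) (fun e _ => fun j => e j + B j)
    · intro d hd
      rw [mem_filter] at hd
      rw [mem_degF]
      show ∑ j, (d j - B j) ≤ T - ∑ i ∈ S, A i
      have hle := hBle d hd.2
      have hd1 : ∑ j, d j ≤ T := mem_degF.mp hd.1
      have h1 : ∑ j, (d j - B j) + ∑ i ∈ S, A i = ∑ j, d j := by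
        rw [← hBsum, ← Finset.sum_add_distrib]
        exact Finset.sum_congr rfl fun j _ => Nat.sub_add_cancel (hle j)
      omega
    · intro e he
      rw [mem_degF] at he
      rw [mem_filter]
      constructor
      · rw [mem_degF]
        show ∑ j, (e j + B j) ≤ T
        rw [Finset.sum_add_distrib, hBsum]
        omega
      · intro i hi
        show A i ≤ e (Fin.castLE hk i) + B (Fin.castLE hk i)
        rw [hBcast i hi]
        exact Nat.le_add_left _ _
    · intro d hd
      rw [mem_filter] at hd
      funext j
      show d j - B j + B j = d j
      exact Nat.sub_add_cancel (hBle d hd.2 j)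
    · intro e _
      funext j
      show e j + B j - B j = e j
      omega
  · rw [if_neg hS, card_eq_zero, Finset.filter_eq_empty_iff]
    intro d hd hcond
    apply hS
    have h1 : ∑ i ∈ S, A i ≤ ∑ i ∈ S, d (Fin.castLE hk i) :=
      Finset.sum_le_sum hcond
    have h2 : ∑ i ∈ S, d (Fin.castLE hk i)
        = ∑ j ∈ S.map (Fin.castLEEmb hk), d j := by
      rw [Finset.sum_map]
      rfl
    have h3 : ∑ j ∈ S.map (Fin.castLEEmb hk), d j ≤ ∑ j, d j :=
      Finset.sum_le_sum_of_subset (Finset.subset_univ _)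
    have h4 : ∑ j, d j ≤ T := mem_degF.mp hd
    omega

/-- Problème III of Bézout's 1779 treatise: the number of monomials in `n` variables of
total degree at most `T` whose exponent in the `i`-th of the first `k` variables is less
than `A i` is the `k`-th finite difference `∑_{S ⊆ Fin k} (−1)^{|S|}·N(T − ∑_{i∈S} A i)`,
where `N(t) = (t + n).choose n` (and the term is `0` when `∑_{i∈S} A i > T`). -/
theorem card_degree_le_with_bounds (n T k : ℕ) (hk : k ≤ n) (A : Fin k → ℕ) :
    ({d : Fin n → ℕ | (∑ i, d i) ≤ T ∧ ∀ i : Fin k, d (Fin.castLE hk i) < A i}.ncard : ℤ) =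
      ∑ S : Finset (Fin k), (-1 : ℤ) ^ S.card *
        (if (∑ i ∈ S, A i) ≤ T then (((T - ∑ i ∈ S, A i) + n).choose n : ℤ) else 0) := by
  classical
  have hset : {d : Fin n → ℕ | (∑ i, d i) ≤ T ∧ ∀ i : Fin k, d (Fin.castLE hk i) < A i} =
      ↑((degF n T).filter fun d => ∀ i : Fin k, d (Fin.castLE hk i) < A i) := by
    ext d
    simp [mem_degF, and_comm]
  rw [hset, Set.ncard_coe_finset]
  have hcard : (((degF n T).filter fun d => ∀ i : Fin k, d (Fin.castLE hk i) < A i).card : ℤ)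
      = ∑ d ∈ degF n T, ∏ i : Fin k,
          ((if A i ≤ d (Fin.castLE hk i) then (-1 : ℤ) else 0) + 1) := by
    rw [← Finset.sum_boole]
    apply Finset.sum_congr rfl
    intro d _
    by_cases h : ∀ i : Fin k, d (Fin.castLE hk i) < A i
    · rw [if_pos h]
      rw [Finset.prod_eq_one]
      intro i _
      rw [if_neg (not_le.mpr (h i))]
      ring
    · rw [if_neg h]
      push_neg at h
      obtain ⟨i, hi⟩ := h
      rw [Finset.prod_eq_zero (mem_univ i)]
      rw [if_pos hi]
      ring
  rw [hcard]
  have hexp : ∀ d : Fin n → ℕ,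
      (∏ i : Fin k, ((if A i ≤ d (Fin.castLE hk i) then (-1 : ℤ) else 0) + 1))
        = ∑ S ∈ (univ : Finset (Fin k)).powerset,
            (∏ i ∈ S, if A i ≤ d (Fin.castLE hk i) then (-1 : ℤ) else 0) *
              ∏ _i ∈ univ \ S, (1 : ℤ) := fun d =>
    Finset.prod_add _ _ _
  rw [Finset.sum_congr rfl fun d _ => hexp d, Finset.sum_comm, Finset.powerset_univ]
  apply Finset.sum_congr rfl
  intro S _
  have hfac : ∀ d : Fin n → ℕ,
      (∏ i ∈ S, if A i ≤ d (Fin.castLE hk i) then (-1 : ℤ) else 0) * ∏ _i ∈ univ \ S, (1 : ℤ)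
        = (-1 : ℤ) ^ S.card * (if ∀ i ∈ S, A i ≤ d (Fin.castLE hk i) then 1 else 0) := by
    intro d
    rw [Finset.prod_const_one, mul_one]
    have : ∀ i ∈ S, (if A i ≤ d (Fin.castLE hk i) then (-1 : ℤ) else 0)
        = (-1) * (if A i ≤ d (Fin.castLE hk i) then 1 else 0) := by
      intro i _
      split <;> ring
    rw [Finset.prod_congr rfl this, Finset.prod_mul_distrib, Finset.prod_const,
      Finset.prod_boole]
    by_cases hall : ∀ i ∈ S, A i ≤ d (Fin.castLE hk i)
    · rw [if_pos hall, if_pos hall]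
    · rw [if_neg hall, if_neg hall]
  rw [Finset.sum_congr rfl fun d _ => hfac d, ← Finset.mul_sum, Finset.sum_boole]
  congr 1
  rw [show ({d ∈ degF n T | ∀ i ∈ S, A i ≤ d (Fin.castLE hk i)} : Finset (Fin n → ℕ)).card
      = _ from card_G n T k hk A S]
  split <;> simp
end

section
/- Let R be a commutative ring, n a natural number, P a polynomial over R with natDegree P ≤ n, k : Fin n → R, and x ∈ R. Then ∑_{S ⊆ Fin n} (−1)^{n−|S|} · P.eval(x + ∑_{i∈S} k(i)) = n! · (coeff P n) · ∏ᵢ k(i), where the sum is over all subsets S of Fin n and n! is interpreted in R. -/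
/-!
The alternating sum is the mixed difference `Δ_[k (n-1)] ⋯ Δ_[k 0]` of `P.eval`, taken at `x`:
peel off one increment at a time, splitting the subsets of `Fin (n + 1)` according to whether
they contain `0`. A single difference `Δ_[r] P.eval` is the evaluation of `P(X + r) - P`, whose
degree is one less and whose coefficient of `Xⁿ` is `(n + 1) * r * P.coeff (n + 1)`; after `n`
differences only the constant `n! * P.coeff n * ∏ k i` survives.
-/

open Polynomial Finset fwdDiff

theorem Finset.powerset_map {α β : Type*} (s : Finset α) (f : α ↪ β) :
    (s.map f).powerset = s.powerset.map ⟨Finset.map f, Finset.map_injective f⟩ := by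
  classical
  simp only [map_eq_image, powerset_image]
  congr 1
  ext1 t
  exact (map_eq_image f t).symm

theorem Fin.sum_finset_succ {β : Type*} [AddCommMonoid β] {n : ℕ}
    (f : Finset (Fin (n + 1)) → β) :
    ∑ S, f S =
      ∑ T : Finset (Fin n), (f (T.map (succEmb n)) + f (insert 0 (T.map (succEmb n)))) := by
  have h0 : (0 : Fin (n + 1)) ∉ univ.map (Fin.succEmb n) := by simp [Fin.succ_ne_zero]
  have huniv : (univ : Finset (Fin (n + 1))) = insert 0 (univ.map (Fin.succEmb n)) := by
    rw [Fin.univ_succ, cons_eq_insert]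
    rfl
  rw [← powerset_univ, huniv, sum_powerset_insert h0, powerset_map, sum_map, sum_map,
    powerset_univ, sum_add_distrib]
  rfl

section MixedDifference

variable {M G : Type*} [AddCommMonoid M] [AddCommGroup G]

/-- `mixedFwdDiff n k f = Δ_[k (n-1)] (⋯ (Δ_[k 0] f))`. -/
def mixedFwdDiff : (n : ℕ) → (Fin n → M) → (M → G) → M → G
  | 0, _, f => f
  | n + 1, k, f => mixedFwdDiff n (Fin.tail k) (Δ_[k 0] f)

theorem mixedFwdDiff_eq_sum (n : ℕ) (k : Fin n → M) (f : M → G) (x : M) :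
    mixedFwdDiff n k f x =
      ∑ S : Finset (Fin n), (-1 : ℤ) ^ (n - #S) • f (x + ∑ i ∈ S, k i) := by
  induction n generalizing f with
  | zero => simp [mixedFwdDiff, Subsingleton.elim (default : Finset (Fin 0)) ∅]
  | succ n ih =>
    rw [mixedFwdDiff, ih, Fin.sum_finset_succ]
    refine sum_congr rfl fun T _ => ?_
    have hT : #T ≤ n := card_le_univ T |>.trans (by simp)
    have h0 : (0 : Fin (n + 1)) ∉ T.map (Fin.succEmb n) := by simp [Fin.succ_ne_zero]
    rw [card_insert_of_notMem h0, sum_insert h0, card_map, sum_map, fwdDiff, smul_sub,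
      Nat.sub_add_comm hT, pow_succ, mul_neg_one, neg_smul, Nat.add_sub_add_right,
      ← add_assoc, add_right_comm x (k 0)]
    simp only [Fin.tail, Fin.coe_succEmb]
    abel

end MixedDifference

namespace Polynomial

variable {R : Type*} [CommRing R]

theorem fwdDiff_eval (P : R[X]) (r : R) : Δ_[r] P.eval = (taylor r P - P).eval := by
  ext x
  simp [fwdDiff, taylor_eval]

theorem coeff_taylor_of_natDegree_le {P : R[X]} {m : ℕ} (h : P.natDegree ≤ m) (r : R) :
    (taylor r P).coeff m = P.coeff m := by
  rcases h.eq_or_lt with rfl | hlt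
  · exact coeff_taylor_natDegree (r := r) (f := P)
  · rw [coeff_eq_zero_of_natDegree_lt hlt,
      coeff_eq_zero_of_natDegree_lt ((natDegree_taylor P r).trans_lt hlt)]

theorem natDegree_taylor_sub_le {P : R[X]} {n : ℕ} (h : P.natDegree ≤ n + 1) (r : R) :
    (taylor r P - P).natDegree ≤ n := by
  rw [natDegree_le_iff_coeff_eq_zero]
  intro m hm
  rw [coeff_sub, coeff_taylor_of_natDegree_le (h.trans hm), sub_self]

theorem coeff_taylor_sub {P : R[X]} {n : ℕ} (h : P.natDegree ≤ n + 1) (r : R) :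
    (taylor r P - P).coeff n = (n + 1) * P.coeff (n + 1) * r := by
  have hlin : (hasseDeriv n P).natDegree ≤ 1 := (natDegree_hasseDeriv_le P n).trans (by omega)
  rw [coeff_sub, taylor_coeff, eq_X_add_C_of_natDegree_le_one hlin]
  simp [hasseDeriv_coeff, add_comm 1 n]

theorem mixedFwdDiff_eval (n : ℕ) (P : R[X]) (hP : P.natDegree ≤ n) (k : Fin n → R) (x : R) :
    mixedFwdDiff n k P.eval x = n.factorial * P.coeff n * ∏ i, k i := by
  induction n generalizing P with
  | zero =>
    rw [eq_C_of_natDegree_le_zero hP]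
    simp [mixedFwdDiff]
  | succ n ih =>
    rw [mixedFwdDiff, fwdDiff_eval, ih _ (natDegree_taylor_sub_le hP _), coeff_taylor_sub hP,
      Fin.prod_univ_succ, Nat.factorial_succ]
    push_cast
    simp only [Fin.tail]
    ring

end Polynomial

/-- The `n`-th mixed finite difference, with increments `k₁, …, kₙ`, of a polynomial
function of degree at most `n` is the constant `n!·(coefficient of Xⁿ)·k₁⋯kₙ`. -/
theorem finite_difference_polynomial {R : Type*} [CommRing R] (n : ℕ)
    (P : Polynomial R) (hP : P.natDegree ≤ n) (k : Fin n → R) (x : R) :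
    ∑ S : Finset (Fin n), (-1 : R) ^ (n - S.card) * P.eval (x + ∑ i ∈ S, k i) =
      (n.factorial : R) * P.coeff n * ∏ i, k i := by
  rw [← P.mixedFwdDiff_eval n hP k x, mixedFwdDiff_eq_sum]
  simp only [zsmul_eq_mul, Int.cast_pow, Int.cast_neg, Int.cast_one]
end

section
/- Let R be a commutative ring, a, b, x ∈ R, and n ≥ 1 a natural number. Then b·(x+a)ⁿ − a·(x+b)ⁿ = (b−a)·( xⁿ − ∑_{k=2}^{n} (n.choose k)·a·b·(∑_{j=0}^{k−2} aʲ·b^{k−2−j})·x^{n−k} ). -/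
/-! Expanding both powers binomially, the coefficient of `x ^ (n - k)` on the left is
`C(n,k) (b aᵏ - a bᵏ) = C(n,k) ab (a^(k-1) - b^(k-1))`, and `a^(k-1) - b^(k-1)` is `(a - b)` times
the geometric sum `∑ aʲ b^(k-2-j)`. Only the `k = 0` term, `(b - a) xⁿ`, escapes this pattern. -/

open Finset

theorem mul_pow_sub_mul_pow {R : Type*} [CommRing R] (a b : R) {k : ℕ} (hk : 1 ≤ k) :
    b * a ^ k - a * b ^ k =
      -((b - a) * (a * b * ∑ j ∈ range (k - 1), a ^ j * b ^ (k - 2 - j))) := by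
  obtain ⟨m, rfl⟩ := Nat.exists_eq_add_of_le' hk
  have hgeom := geom_sum₂_mul a b m
  simp only [Nat.add_sub_cancel, show m + 1 - 2 = m - 1 by omega] at hgeom ⊢
  linear_combination (-(a * b)) * hgeom

theorem sum_Icc_two_eq_sum_range {M : Type*} [AddCommMonoid M] (f : ℕ → M) (n : ℕ)
    (h0 : f 0 = 0) (h1 : f 1 = 0) : ∑ k ∈ Icc 2 n, f k = ∑ k ∈ range (n + 1), f k := by
  refine sum_subset (fun k hk => ?_) fun k hk hk' => ?_
  · simp only [mem_Icc] at hk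
    simp only [mem_range]
    omega
  · obtain rfl | rfl : k = 0 ∨ k = 1 := by simp only [mem_Icc, mem_range] at hk hk'; omega
    exacts [h0, h1]

theorem bezout_equation_E_general {R : Type*} [CommRing R] (a b x : R) (n : ℕ) :
    b * (x + a) ^ n - a * (x + b) ^ n =
      (b - a) * (x ^ n - ∑ k ∈ Finset.Icc 2 n, (n.choose k : R) * (a * b) *
        (∑ j ∈ Finset.range (k - 1), a ^ j * b ^ (k - 2 - j)) * x ^ (n - k)) := by
  have binomial (c : R) :
      (x + c) ^ n = ∑ k ∈ range (n + 1), c ^ k * x ^ (n - k) * n.choose k := by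
    rw [add_comm, add_pow]
  rw [sum_Icc_two_eq_sum_range _ n (by simp) (by simp), binomial, binomial, mul_sum, mul_sum,
    ← sum_sub_distrib, sum_range_succ', sum_range_succ']
  have hterm (k : ℕ) : b * (a ^ (k + 1) * x ^ (n - (k + 1)) * n.choose (k + 1)) -
      a * (b ^ (k + 1) * x ^ (n - (k + 1)) * n.choose (k + 1)) =
      -((b - a) * ((n.choose (k + 1) : R) * (a * b) *
        (∑ j ∈ range (k + 1 - 1), a ^ j * b ^ (k + 1 - 2 - j)) * x ^ (n - (k + 1)))) := by
    linear_combination (x ^ (n - (k + 1)) * n.choose (k + 1)) *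
      mul_pow_sub_mul_pow a b (Nat.le_add_left 1 k)
  rw [sum_congr rfl fun k _ => hterm k, sum_neg_distrib, ← mul_sum]
  simp only [pow_zero, tsub_zero, zero_tsub, Nat.choose_zero_right, Nat.cast_one, range_zero,
    sum_empty]
  ring

/-- Bézout's 1762 equation (E): eliminating `y` between `yⁿ + h = 0` and
`y = (x+a)/(x+b)` with `h = −a/b` yields, as a polynomial identity,
`b·(x+a)ⁿ − a·(x+b)ⁿ = (b−a)·(xⁿ − ∑_{k=2}^{n} C(n,k)·ab·(a^{k−2} + a^{k−3}b + ⋯ + b^{k−2})·x^{n−k})`. -/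
theorem bezout_equation_E {R : Type*} [CommRing R] (a b x : R) (n : ℕ) (hn : 1 ≤ n) :
    b * (x + a) ^ n - a * (x + b) ^ n =
      (b - a) * (x ^ n - ∑ k ∈ Finset.Icc 2 n, (n.choose k : R) * (a * b) *
        (∑ j ∈ Finset.range (k - 1), a ^ j * b ^ (k - 2 - j)) * x ^ (n - k)) :=
  bezout_equation_E_general a b x n
end
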